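/- arXiv:2407.01121 — 2 statements merged into one kernel-verified Lean document; each statement's English description precedes it below -/
import Mathlib

section
/- If G is trivially well-dominated with parameter t and H is well-dominated, then every minimal dominating set of G ⊠ H has cardinality exactly t·γ(H), where γ(H) is the domination number of H. -/
open SimpleGraph

variable {V : Type*} {W : Type*}

/-- The strong product of two simple graphs. -/
def strongProd (G : SimpleGraph V) (H : SimpleGraph W) : SimpleGraph (V × W) where
  Adj x y := x ≠ y ∧ (x.1 = y.1 ∨ G.Adj x.1 y.1) ∧ (x.2 = y.2 ∨ H.Adj x.2 y.2)
  symm := ⟨fun x y ⟨hne, h1, h2⟩ =>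
    ⟨hne.symm, h1.imp Eq.symm (fun h => h.symm), h2.imp Eq.symm (fun h => h.symm)⟩⟩
  loopless := ⟨fun x h => h.1 rfl⟩

/-- A dominating set: every vertex outside has a neighbor inside. -/
def IsDomSet (G : SimpleGraph V) (D : Set V) : Prop :=
  ∀ v, v ∉ D → ∃ u ∈ D, G.Adj u v

/-- A minimal dominating set. -/
def IsMinlDomSet (G : SimpleGraph V) (D : Set V) : Prop :=
  IsDomSet G D ∧ ∀ D', D' ⊂ D → ¬ IsDomSet G D'

/-- A graph is well-dominated if every minimal dominating set has minimum cardinality. -/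
def WellDominated (G : SimpleGraph V) : Prop :=
  ∀ D D' : Set V, IsMinlDomSet G D → IsDomSet G D' → D.ncard ≤ D'.ncard

/-- The domination number. -/
noncomputable def domNum (G : SimpleGraph V) : ℕ :=
  sInf {n | ∃ D : Set V, IsDomSet G D ∧ D.ncard = n}

/-- The closed neighborhood of a vertex. -/
def closedNbhd (G : SimpleGraph V) (v : V) : Set V := insert v (G.neighborSet v)

/-- `G` is trivially well-dominated via the vertices `u 0, …, u (t-1)`:
their closed neighborhoods are cliques and partition `V`. -/
def TriviallyWellDominatedWith (G : SimpleGraph V) {t : ℕ} (u : Fin t → V) : Prop :=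
  (∀ i, G.IsClique (closedNbhd G (u i))) ∧ (∀ v : V, ∃! i, v ∈ closedNbhd G (u i))

def TriviallyWellDominated (G : SimpleGraph V) : Prop :=
  ∃ (t : ℕ) (u : Fin t → V), TriviallyWellDominatedWith G u

/-- An edge dominating set: every edge of `G` not in `F` shares an endpoint
with some edge of `F`. -/
def IsEDS (G : SimpleGraph V) (F : Set (Sym2 V)) : Prop :=
  F ⊆ G.edgeSet ∧ ∀ e ∈ G.edgeSet, e ∉ F → ∃ f ∈ F, ∃ v, v ∈ e ∧ v ∈ f

/-- A minimal edge dominating set. -/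
def IsMinlEDS (G : SimpleGraph V) (F : Set (Sym2 V)) : Prop :=
  IsEDS G F ∧ ∀ F', F' ⊂ F → ¬ IsEDS G F'

/-- Well-edge-dominated: every minimal edge dominating set has minimum cardinality. -/
def WellEdgeDominated (G : SimpleGraph V) : Prop :=
  ∀ F F' : Set (Sym2 V), IsMinlEDS G F → IsEDS G F' → F.ncard ≤ F'.ncard

/-- A matching, as a set of pairwise nonadjacent edges. -/
def IsMatchingSet (G : SimpleGraph V) (M : Set (Sym2 V)) : Prop :=
  M ⊆ G.edgeSet ∧ ∀ e ∈ M, ∀ f ∈ M, e ≠ f → ∀ v : V, ¬ (v ∈ e ∧ v ∈ f)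

/-- A maximal matching. -/
def IsMaxlMatching (G : SimpleGraph V) (M : Set (Sym2 V)) : Prop :=
  IsMatchingSet G M ∧ ∀ M', M ⊆ M' → IsMatchingSet G M' → M' = M

/-- A maximum matching. -/
def IsMaxMatching (G : SimpleGraph V) (M : Set (Sym2 V)) : Prop :=
  IsMatchingSet G M ∧ ∀ M', IsMatchingSet G M' → M'.ncard ≤ M.ncard

/-- Equimatchable: every maximal matching is maximum. -/
def Equimatchable (G : SimpleGraph V) : Prop :=
  ∀ M M' : Set (Sym2 V), IsMaxlMatching G M → IsMatchingSet G M' → M'.ncard ≤ M.ncard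

/-- The set of endpoints of the edges of `M`. -/
def mVerts (M : Set (Sym2 V)) : Set V := {v | ∃ e ∈ M, v ∈ e}

/-- A perfect matching covers every vertex. -/
def IsPerfectMatchingSet (G : SimpleGraph V) (M : Set (Sym2 V)) : Prop :=
  IsMatchingSet G M ∧ ∀ v : V, v ∈ mVerts M

/-- A near-perfect matching covers all vertices but exactly one. -/
def IsNearPerfectMatchingSet (G : SimpleGraph V) (M : Set (Sym2 V)) : Prop :=
  IsMatchingSet G M ∧ ∃ w : V, mVerts M = {w}ᶜ

/-- The matching number. -/
noncomputable def matchNum (G : SimpleGraph V) : ℕ :=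
  sSup {n | ∃ M : Set (Sym2 V), IsMatchingSet G M ∧ M.ncard = n}

/-- The independence number. -/
noncomputable def indepNum (G : SimpleGraph V) : ℕ :=
  sSup {n | ∃ S : Set V, (S.Pairwise fun u v => ¬ G.Adj u v) ∧ S.ncard = n}

/-- `G` with a set of vertices deleted (induced subgraph on the complement). -/
abbrev delVerts (G : SimpleGraph V) (S : Set V) : SimpleGraph ↥(Sᶜ) := G.induce Sᶜ

/-- Factor-critical: deleting any vertex leaves a graph with a perfect matching. -/
def FactorCritical (G : SimpleGraph V) : Prop :=
  ∀ v : V, ∃ M, IsPerfectMatchingSet (delVerts G {v}) M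

/-- 2-connected: at least three vertices, connected, and no cutvertex. -/
def TwoConnected (G : SimpleGraph V) [Fintype V] : Prop :=
  3 ≤ Fintype.card V ∧ G.Connected ∧ ∀ v : V, (delVerts G {v}).Connected


/-!
The closed neighbourhoods `N[u i]` are cliques partitioning `V`, so `V × W` splits into the blocks
`N[u i] × W`. Let `D` be a minimal dominating set of `G ⊠ H` and `Dᵢ` the projection to `W` of its
part in the `i`-th block. Each `Dᵢ` dominates `H`, since anything dominating `(u i, w)` lies in the
`i`-th block. A private neighbour of a point of `D` lies in the same block as that point; as the
block is a clique, this makes the projection injective on each block and `Dᵢ` a minimal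
dominating set of `H`. Hence `|D| = ∑ |Dᵢ| = t γ(H)`, because `H` is well-dominated.
-/

theorem mem_closedNbhd {G : SimpleGraph V} {a b : V} :
    a ∈ closedNbhd G b ↔ a = b ∨ G.Adj b a := by
  simp [closedNbhd]

theorem mem_closedNbhd_comm {G : SimpleGraph V} {a b : V} :
    a ∈ closedNbhd G b ↔ b ∈ closedNbhd G a := by
  simp only [mem_closedNbhd, eq_comm, G.adj_comm]

theorem SimpleGraph.IsClique.mem_closedNbhd {G : SimpleGraph V} {s : Set V} (hs : G.IsClique s)
    {a b : V} (ha : a ∈ s) (hb : b ∈ s) : a ∈ closedNbhd G b := by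
  by_cases hab : a = b
  · exact _root_.mem_closedNbhd.2 (Or.inl hab)
  · exact _root_.mem_closedNbhd.2 (Or.inr (hs hb ha (Ne.symm hab)))

theorem mem_closedNbhd_strongProd {G : SimpleGraph V} {H : SimpleGraph W} {x y : V × W} :
    x ∈ closedNbhd (strongProd G H) y ↔ x.1 ∈ closedNbhd G y.1 ∧ x.2 ∈ closedNbhd H y.2 := by
  obtain ⟨a, b⟩ := x
  obtain ⟨c, d⟩ := y
  simp only [mem_closedNbhd, strongProd, ne_eq, Prod.mk.injEq]
  tauto

theorem isDomSet_iff_forall_exists_mem_closedNbhd {G : SimpleGraph V} {D : Set V} :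
    IsDomSet G D ↔ ∀ v, ∃ d ∈ D, v ∈ closedNbhd G d := by
  refine ⟨fun hD v => ?_, fun hD v hv => ?_⟩
  · by_cases hvD : v ∈ D
    · exact ⟨v, hvD, Set.mem_insert v _⟩
    · obtain ⟨d, hd, hdv⟩ := hD v hvD
      exact ⟨d, hd, mem_closedNbhd.2 (Or.inr hdv)⟩
  · obtain ⟨d, hd, hvd⟩ := hD v
    rcases mem_closedNbhd.1 hvd with rfl | hdv
    · exact absurd hd hv
    · exact ⟨d, hd, hdv⟩

def IsPrivNbr (G : SimpleGraph V) (D : Set V) (d x : V) : Prop :=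
  x ∈ closedNbhd G d ∧ ∀ y ∈ D, x ∈ closedNbhd G y → y = d

theorem isMinlDomSet_iff_forall_exists_privNbr {G : SimpleGraph V} {D : Set V} :
    IsMinlDomSet G D ↔ IsDomSet G D ∧ ∀ d ∈ D, ∃ x, IsPrivNbr G D d x := by
  refine ⟨fun ⟨hD, hmin⟩ => ⟨hD, fun d hd => ?_⟩, fun ⟨hD, hpriv⟩ => ⟨hD, fun D' hD' hdom => ?_⟩⟩
  · have hnot : ¬ IsDomSet G (D \ {d}) := hmin _ (Set.sdiff_singleton_ssubset.2 hd)
    simp only [isDomSet_iff_forall_exists_mem_closedNbhd, not_forall, not_exists] at hnot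
    obtain ⟨x, hx⟩ := hnot
    obtain ⟨d', hd', hxd'⟩ := isDomSet_iff_forall_exists_mem_closedNbhd.1 hD x
    have hother : ∀ y ∈ D, x ∈ closedNbhd G y → y = d := fun y hy hxy => by
      by_contra hyd
      exact hx y ⟨⟨hy, hyd⟩, hxy⟩
    exact ⟨x, hother d' hd' hxd' ▸ hxd', hother⟩
  · obtain ⟨d, hdD, hdD'⟩ := Set.exists_of_ssubset hD'
    obtain ⟨x, -, hx⟩ := hpriv d hdD
    obtain ⟨y, hy, hxy⟩ := isDomSet_iff_forall_exists_mem_closedNbhd.1 hdom x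
    exact hdD' (hx y (hD'.1 hy) hxy ▸ hy)

theorem WellDominated.ncard_eq_domNum {H : SimpleGraph W} (hH : WellDominated H) {D : Set W}
    (hD : IsMinlDomSet H D) : D.ncard = domNum H := by
  have hne : {n | ∃ S : Set W, IsDomSet H S ∧ S.ncard = n}.Nonempty :=
    ⟨_, Set.univ, fun v hv => absurd (Set.mem_univ v) hv, rfl⟩
  obtain ⟨S, hS, hScard⟩ := Nat.sInf_mem hne
  exact le_antisymm (by rw [domNum, ← hScard]; exact hH D S hD hS) (Nat.sInf_le ⟨D, hD.1, rfl⟩)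

theorem Set.ncard_eq_sum_ncard_inter {α ι : Type*} [Fintype ι] {B : ι → Set α}
    (hB : ∀ a, ∃! i, a ∈ B i) {S : Set α} (hS : S.Finite) :
    S.ncard = ∑ i, (S ∩ B i).ncard := by
  have hunion : S = ⋃ i, S ∩ B i := by
    rw [← Set.inter_iUnion, Set.iUnion_eq_univ_iff.2 fun a => (hB a).exists, Set.inter_univ]
  have hdisj : Pairwise (Function.onFun Disjoint fun i => S ∩ B i) := fun i j hij =>
    Set.disjoint_left.2 fun a hi hj => hij ((hB a).unique hi.2 hj.2)
  rw [← finsum_eq_sum_of_fintype, ← Set.ncard_iUnion_of_finite (fun i => hS.inter_of_left _) hdisj,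
    ← hunion]

def slice (D : Set (V × W)) (B : Set V) : Set W := Prod.snd '' (D ∩ Prod.fst ⁻¹' B)

theorem mem_slice {D : Set (V × W)} {B : Set V} {w : W} :
    w ∈ slice D B ↔ ∃ v ∈ B, (v, w) ∈ D := by
  simp [slice, and_comm]

theorem IsDomSet.slice_closedNbhd {G : SimpleGraph V} {H : SimpleGraph W} {D : Set (V × W)}
    (hD : IsDomSet (strongProd G H) D) (v : V) : IsDomSet H (slice D (closedNbhd G v)) := by
  refine isDomSet_iff_forall_exists_mem_closedNbhd.2 fun w => ?_
  obtain ⟨d, hd, hvw⟩ := isDomSet_iff_forall_exists_mem_closedNbhd.1 hD (v, w)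
  obtain ⟨hv, hw⟩ := mem_closedNbhd_strongProd.1 hvw
  exact ⟨d.2, mem_slice.2 ⟨d.1, mem_closedNbhd_comm.1 hv, hd⟩, hw⟩

namespace TriviallyWellDominatedWith

variable {G : SimpleGraph V} {H : SimpleGraph W} {t : ℕ} {u : Fin t → V}
  (hG : TriviallyWellDominatedWith G u) {D : Set (V × W)}
include hG

theorem eq_of_isPrivNbr {d x y : V × W} (hx : IsPrivNbr (strongProd G H) D d x) {i : Fin t}
    (hxi : x.1 ∈ closedNbhd G (u i)) (hy : y ∈ D) (hyi : y.1 ∈ closedNbhd G (u i))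
    (hxy : x.2 ∈ closedNbhd H y.2) : y = d :=
  hx.2 y hy (mem_closedNbhd_strongProd.2 ⟨(hG.1 i).mem_closedNbhd hxi hyi, hxy⟩)

/-- The slice over the clique containing `x.1` dominates `x.2`; the point of `D` responsible lies
in the closed neighbourhood of `x`, so by privacy it is `d`. -/
theorem fst_mem_of_isPrivNbr (hD : IsDomSet (strongProd G H) D) {d x : V × W} (hd : d ∈ D)
    (hx : IsPrivNbr (strongProd G H) D d x) {i : Fin t} (hdi : d.1 ∈ closedNbhd G (u i)) :
    x.1 ∈ closedNbhd G (u i) := by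
  obtain ⟨j, hxj, -⟩ := hG.2 x.1
  obtain ⟨w, hw, hxw⟩ :=
    isDomSet_iff_forall_exists_mem_closedNbhd.1 (hD.slice_closedNbhd (u j)) x.2
  obtain ⟨v, hvj, hvw⟩ := mem_slice.1 hw
  obtain rfl := hG.eq_of_isPrivNbr hx hxj hvw hvj hxw
  rwa [(hG.2 v).unique hdi hvj]

theorem exists_privNbr_slice (hD : IsMinlDomSet (strongProd G H) D) {d : V × W} (hd : d ∈ D)
    {i : Fin t} (hdi : d.1 ∈ closedNbhd G (u i)) :
    ∃ b ∈ closedNbhd H d.2, ∀ y ∈ D, y.1 ∈ closedNbhd G (u i) → b ∈ closedNbhd H y.2 → y = d := by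
  obtain ⟨x, hx⟩ := (isMinlDomSet_iff_forall_exists_privNbr.1 hD).2 d hd
  exact ⟨x.2, (mem_closedNbhd_strongProd.1 hx.1).2, fun y hy hyi hxy =>
    hG.eq_of_isPrivNbr hx (hG.fst_mem_of_isPrivNbr hD.1 hd hx hdi) hy hyi hxy⟩

theorem injOn_snd (hD : IsMinlDomSet (strongProd G H) D) (i : Fin t) :
    Set.InjOn Prod.snd (D ∩ Prod.fst ⁻¹' closedNbhd G (u i)) := by
  rintro d ⟨hd, hdi⟩ y ⟨hy, hyi⟩ hdy
  obtain ⟨b, hb, hpriv⟩ := hG.exists_privNbr_slice hD hd hdi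
  exact (hpriv y hy hyi (hdy ▸ hb)).symm

theorem isMinlDomSet_slice (hD : IsMinlDomSet (strongProd G H) D) (i : Fin t) :
    IsMinlDomSet H (slice D (closedNbhd G (u i))) := by
  refine isMinlDomSet_iff_forall_exists_privNbr.2 ⟨hD.1.slice_closedNbhd (u i), fun w hw => ?_⟩
  obtain ⟨v, hvi, hvw⟩ := mem_slice.1 hw
  obtain ⟨b, hb, hpriv⟩ := hG.exists_privNbr_slice hD hvw hvi
  refine ⟨b, hb, fun w' hw' hbw' => ?_⟩
  obtain ⟨v', hv'i, hv'w'⟩ := mem_slice.1 hw'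
  exact congrArg Prod.snd (hpriv _ hv'w' hv'i hbw')

end TriviallyWellDominatedWith

theorem stmt2 [Fintype V] [Fintype W] (G : SimpleGraph V) (H : SimpleGraph W)
    {t : ℕ} (u : Fin t → V) (hG : TriviallyWellDominatedWith G u)
    (hH : WellDominated H) (D : Set (V × W)) (hD : IsMinlDomSet (strongProd G H) D) :
    D.ncard = t * domNum H := by
  calc D.ncard = ∑ i, (D ∩ Prod.fst ⁻¹' closedNbhd G (u i)).ncard :=
        Set.ncard_eq_sum_ncard_inter (B := fun i => Prod.fst ⁻¹' closedNbhd G (u i))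
          (fun p => hG.2 p.1) D.toFinite
    _ = ∑ i, (slice D (closedNbhd G (u i))).ncard :=
        Finset.sum_congr rfl fun i _ => ((hG.injOn_snd hD i).ncard_image).symm
    _ = t * domNum H := by
        rw [Finset.sum_congr rfl fun i _ => hH.ncard_eq_domNum (hG.isMinlDomSet_slice hD i),
          Finset.sum_const, Finset.card_univ, Fintype.card_fin, smul_eq_mul]
end

section
/- If the strong product of two nontrivial connected graphs G and H is well-edge-dominated, then at least one of G and H has a perfect matching. -/
/-!
Suppose neither factor has a perfect matching and let `M`, `N` be maximum matchings of `G` and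
`H`. Copying `M` into every layer `V × {w}`, and `N` into every layer `{u} × W` over an
`M`-exposed vertex `u`, gives a matching of `G ⊠ H` whose exposed vertices, those of
`(V ∖ V(M)) × (W ∖ V(N))`, are independent; so it is a maximal matching and hence a minimal edge
dominating set.

By connectivity there are exposed vertices `a`, `b` with matched neighbours `a'`, `b'`, whose
partners are `a''` and `b''`. Near `(a, b)`, a set `S` of two or four edges of that matching can
be replaced by `|S| + 1` edges so that the result is still a minimal edge dominating set; which
replacement works depends on whether `a a''` and `b b''` are both edges. The freed vertices stay
independent because `a''` has no exposed neighbour other than `a` (that would give an augmenting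
path), and likewise for `b''`. So `G ⊠ H` has minimal edge dominating sets of two sizes.
-/

open SimpleGraph

variable {V : Type*} {W : Type*}

section Matchings

variable {α : Type*} {Γ : SimpleGraph α} {M S F F' : Set (Sym2 α)} {e f : Sym2 α} {x y : α}

lemma mem_mVerts : x ∈ mVerts F ↔ ∃ e ∈ F, x ∈ e := Iff.rfl

@[simp] lemma mem_mVerts_insert : x ∈ mVerts (insert e F) ↔ x ∈ e ∨ x ∈ mVerts F := by
  simp [mem_mVerts]

@[simp] lemma mem_mVerts_singleton : x ∈ mVerts {e} ↔ x ∈ e := by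
  simp [mem_mVerts]

lemma mem_mVerts_union : x ∈ mVerts (F ∪ F') ↔ x ∈ mVerts F ∨ x ∈ mVerts F' := by
  simp only [mem_mVerts, Set.mem_union, or_and_right, exists_or]

lemma ncard_insert_of_notMem_mVerts [Finite α] (hx : x ∉ mVerts M) :
    (insert s(x, y) M).ncard = M.ncard + 1 :=
  Set.ncard_insert_of_notMem fun h => hx ⟨_, h, Sym2.mem_mk_left x y⟩

namespace IsMatchingSet

lemma eq_of_mem (hM : IsMatchingSet Γ M) (he : e ∈ M) (hf : f ∈ M) (hxe : x ∈ e)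
    (hxf : x ∈ f) : e = f :=
  by_contra fun hne => hM.2 e he f hf hne x ⟨hxe, hxf⟩

lemma mono (hM : IsMatchingSet Γ M) (hF : F ⊆ M) : IsMatchingSet Γ F :=
  ⟨hF.trans hM.1, fun e he f hf => hM.2 e (hF he) f (hF hf)⟩

lemma mem_mVerts_sdiff (hM : IsMatchingSet Γ M) (hSM : S ⊆ M) :
    x ∈ mVerts (M \ S) ↔ x ∈ mVerts M ∧ x ∉ mVerts S := by
  constructor
  · rintro ⟨e, ⟨heM, heS⟩, hxe⟩
    refine ⟨⟨e, heM, hxe⟩, fun ⟨f, hfS, hxf⟩ => heS ?_⟩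
    rwa [hM.eq_of_mem heM (hSM hfS) hxe hxf]
  · rintro ⟨⟨e, heM, hxe⟩, hxS⟩
    exact ⟨e, ⟨heM, fun heS => hxS ⟨e, heS, hxe⟩⟩, hxe⟩

lemma insert (hM : IsMatchingSet Γ M) (hxy : Γ.Adj x y) (hx : x ∉ mVerts M)
    (hy : y ∉ mVerts M) : IsMatchingSet Γ (insert s(x, y) M) := by
  refine ⟨Set.insert_subset hxy hM.1, ?_⟩
  have hfresh : ∀ g ∈ M, ∀ v, v ∈ s(x, y) → v ∉ g := by
    intro g hg v hv hvg
    rcases Sym2.mem_iff.mp hv with rfl | rfl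
    exacts [hx ⟨g, hg, hvg⟩, hy ⟨g, hg, hvg⟩]
  rintro e (rfl | he) f (rfl | hf) hne v ⟨hve, hvf⟩
  · exact hne rfl
  · exact hfresh f hf v hve hvf
  · exact hfresh e he v hvf hve
  · exact hM.2 e he f hf hne v ⟨hve, hvf⟩

lemma isEDS (hM : IsMatchingSet Γ M) (hind : Γ.IsIndepSet (mVerts M)ᶜ) : IsEDS Γ M := by
  refine ⟨hM.1, fun e he _ => ?_⟩
  induction e using Sym2.ind with
  | _ x y =>
    by_contra! hdom
    have hx : x ∉ mVerts M := fun ⟨f, hf, hxf⟩ => hdom f hf x (Sym2.mem_mk_left x y) hxf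
    have hy : y ∉ mVerts M := fun ⟨f, hf, hyf⟩ => hdom f hf y (Sym2.mem_mk_right x y) hyf
    exact hind hx hy (Γ.ne_of_adj he) he

end IsMatchingSet

lemma exists_isMaxMatching [Finite α] (Γ : SimpleGraph α) : ∃ M, IsMaxMatching Γ M := by
  let sizes : Set ℕ := {n | ∃ M, IsMatchingSet Γ M ∧ M.ncard = n}
  have hne : sizes.Nonempty := ⟨0, ∅, ⟨Set.empty_subset _, by simp⟩, Set.ncard_empty _⟩
  have hbdd : BddAbove sizes := ⟨(Set.univ : Set (Sym2 α)).ncard, by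
    rintro n ⟨M, -, rfl⟩
    exact Set.ncard_le_ncard (Set.subset_univ M)⟩
  obtain ⟨M, hM, hcard⟩ := Nat.sSup_mem hne hbdd
  exact ⟨M, hM, fun M' hM' => hcard ▸ le_csSup hbdd ⟨M', hM', rfl⟩⟩

namespace IsMaxMatching

variable [Finite α]

lemma isIndepSet_compl (hM : IsMaxMatching Γ M) : Γ.IsIndepSet (mVerts M)ᶜ := by
  intro x hx y hy _ hxy
  have := hM.2 _ (hM.1.insert hxy hx hy)
  rw [ncard_insert_of_notMem_mVerts hx] at this
  omega

/-- Otherwise `u a'' a' a` would be an augmenting path. -/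
lemma eq_of_adj_exposed {a a' a'' u : α} (hM : IsMaxMatching Γ M) (ha : a ∉ mVerts M)
    (haa' : Γ.Adj a a') (hedge : s(a', a'') ∈ M) (hu : u ∉ mVerts M) (hu'' : Γ.Adj a'' u) :
    u = a := by
  by_contra hua
  have hcov : ∀ v ∉ mVerts M, v ≠ a' ∧ v ≠ a'' := fun v hv =>
    ⟨fun h => hv ⟨_, hedge, h ▸ Sym2.mem_mk_left _ _⟩,
      fun h => hv ⟨_, hedge, h ▸ Sym2.mem_mk_right _ _⟩⟩
  set M₀ := M \ {s(a', a'')}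
  have hM₀ : IsMatchingSet Γ M₀ := hM.1.mono Set.sdiff_subset
  have hfree : ∀ v, v ∉ mVerts M ∨ v ∈ s(a', a'') → v ∉ mVerts M₀ := fun v hv hv₀ => by
    rw [hM.1.mem_mVerts_sdiff (Set.singleton_subset_iff.mpr hedge), mem_mVerts_singleton] at hv₀
    tauto
  have hM₁ :=
    hM₀.insert hu''.symm (hfree u (.inl hu)) (hfree a'' (.inr (Sym2.mem_mk_right _ _)))
  have ha₁ : a ∉ mVerts (insert s(u, a'') M₀) := by
    simp [hfree a (.inl ha), (hcov a ha).2, Ne.symm hua]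
  have hM₂ := hM₁.insert haa' ha₁ (by simp [hfree a' (.inr (Sym2.mem_mk_left _ _)),
    (hcov u hu).1.symm, Γ.ne_of_adj (hM.1.1 hedge)])
  have hle := hM.2 _ hM₂
  rw [ncard_insert_of_notMem_mVerts ha₁, ncard_insert_of_notMem_mVerts (hfree u (.inl hu)),
    Set.ncard_sdiff_singleton_of_mem hedge] at hle
  have : 0 < M.ncard := (Set.ncard_pos (Set.toFinite M)).mpr ⟨_, hedge⟩
  omega

end IsMaxMatching

end Matchings

section EdgeDomination

variable {α : Type*} {Γ : SimpleGraph α} {M S T F : Set (Sym2 α)}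

lemma isMinlEDS_of_private (hF : IsEDS Γ F)
    (hpriv : ∀ f ∈ F, ∃ x y, Γ.Adj x y ∧ ∀ g ∈ F, g ≠ f → x ∉ g ∧ y ∉ g) :
    IsMinlEDS Γ F := by
  refine ⟨hF, fun F' ⟨hsub, hne⟩ hF' => ?_⟩
  obtain ⟨f, hfF, hfF'⟩ := Set.not_subset.mp hne
  obtain ⟨x, y, hxy, hfree⟩ := hpriv f hfF
  have hfree' : ∀ g ∈ F', x ∉ g ∧ y ∉ g := fun g hg =>
    hfree g (hsub hg) (by rintro rfl; exact hfF' hg)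
  obtain ⟨g, hg, v, hv, hvg⟩ :=
    hF'.2 _ hxy fun h => (hfree' _ h).1 (Sym2.mem_mk_left x y)
  rcases Sym2.mem_iff.mp hv with rfl | rfl
  exacts [(hfree' g hg).1 hvg, (hfree' g hg).2 hvg]

/-- `(M \ S) ∪ T` is a minimal edge dominating set larger than `M`: each edge of `M \ S` is its
own private edge, since `T` only touches the vertices freed by removing `S`. -/
theorem not_wellEdgeDominated_of_exchange [Finite α] (hM : IsMatchingSet Γ M)
    (hMeds : IsEDS Γ M) (hSM : S ⊆ M) (hT : T ⊆ Γ.edgeSet) (hcard : S.ncard < T.ncard)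
    (hTfree : mVerts T ⊆ (mVerts (M \ S))ᶜ)
    (hdom : Γ.IsIndepSet ((mVerts (M \ S))ᶜ \ mVerts T))
    (hpriv : ∀ t ∈ T, ∃ x y, Γ.Adj x y ∧ x ∈ (mVerts (M \ S))ᶜ ∧ y ∈ (mVerts (M \ S))ᶜ ∧
      ∀ t' ∈ T, t' ≠ t → x ∉ t' ∧ y ∉ t') :
    ¬ WellEdgeDominated Γ := by
  intro hwed
  have hK : IsMatchingSet Γ (M \ S) := hM.mono Set.sdiff_subset
  have hF : IsEDS Γ ((M \ S) ∪ T) := by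
    refine ⟨Set.union_subset hK.1 hT, fun e he _ => ?_⟩
    induction e using Sym2.ind with
    | _ x y =>
      by_contra! hndom
      have hfree : ∀ v ∈ s(x, y), v ∉ mVerts ((M \ S) ∪ T) := fun v hv ⟨f, hf, hvf⟩ =>
        hndom f hf v hv hvf
      simp only [mem_mVerts_union, not_or] at hfree
      exact hdom (hfree x (Sym2.mem_mk_left x y)) (hfree y (Sym2.mem_mk_right x y))
        (Γ.ne_of_adj he) he
  have hFmin : IsMinlEDS Γ ((M \ S) ∪ T) := by
    refine isMinlEDS_of_private hF ?_
    rintro f (hf | hf)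
    · induction f using Sym2.ind with
      | _ x y =>
        refine ⟨x, y, hK.1 hf, ?_⟩
        rintro g (hg | hg) hne
        · exact ⟨fun h => hne (hK.eq_of_mem hg hf h (Sym2.mem_mk_left x y)),
            fun h => hne (hK.eq_of_mem hg hf h (Sym2.mem_mk_right x y))⟩
        · exact ⟨fun h => hTfree ⟨g, hg, h⟩ ⟨_, hf, Sym2.mem_mk_left x y⟩,
            fun h => hTfree ⟨g, hg, h⟩ ⟨_, hf, Sym2.mem_mk_right x y⟩⟩
    · obtain ⟨x, y, hxy, hx, hy, hfree⟩ := hpriv f hf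
      refine ⟨x, y, hxy, ?_⟩
      rintro g (hg | hg) hne
      exacts [⟨fun h => hx ⟨g, hg, h⟩, fun h => hy ⟨g, hg, h⟩⟩, hfree g hg hne]
  have hdisj : Disjoint (M \ S) T := Set.disjoint_left.mpr fun e heM heT => by
    induction e using Sym2.ind with
    | _ x y => exact hTfree ⟨_, heT, Sym2.mem_mk_left x y⟩ ⟨_, heM, Sym2.mem_mk_left x y⟩
  have hle := hwed _ M hFmin hMeds
  rw [Set.ncard_union_eq hdisj, Set.ncard_sdiff hSM] at hle
  have := Set.ncard_le_ncard hSM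
  omega

end EdgeDomination

section StrongProduct

variable {G : SimpleGraph V} {H : SimpleGraph W}

@[simp] lemma strongProd_adj {p q : V × W} :
    (strongProd G H).Adj p q ↔
      p ≠ q ∧ (p.1 = q.1 ∨ G.Adj p.1 q.1) ∧ (p.2 = q.2 ∨ H.Adj p.2 q.2) :=
  Iff.rfl

lemma strongProd_adj_swap {p q : V × W} :
    (strongProd H G).Adj p.swap q.swap ↔ (strongProd G H).Adj p q := by
  simp only [strongProd_adj, Prod.fst_swap, Prod.snd_swap, ne_eq, Prod.swap_inj]
  tauto

variable {A : Set V} {B : Set W}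

lemma isIndepSet_prod_strongProd (hA : G.IsIndepSet A) (hB : H.IsIndepSet B) :
    (strongProd G H).IsIndepSet (A ×ˢ B) := by
  rintro ⟨x, y⟩ ⟨hx, hy⟩ ⟨u, w⟩ ⟨hu, hw⟩ hne ⟨-, hxu, hyw⟩
  rcases hxu with rfl | hxu
  · rcases hyw with rfl | hyw
    exacts [hne rfl, hB hy hw (H.ne_of_adj hyw) hyw]
  · exact hA hx hu (G.ne_of_adj hxu) hxu

lemma eq_of_strongProd_adj_of_mem_prod_left (hB : H.IsIndepSet B) {x a : V} {b : W}
    (hx : x ∉ A) (hxA : ∀ u ∈ A, G.Adj x u → u = a) (hb : b ∈ B) {p : V × W}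
    (hp : p ∈ A ×ˢ B) (hadj : (strongProd G H).Adj (x, b) p) : p = (a, b) := by
  obtain ⟨u, w⟩ := p
  obtain ⟨hu, hw⟩ := hp
  obtain ⟨-, hxu, hbw⟩ := hadj
  have hua : u = a := hxA u hu (hxu.resolve_left fun h : x = u => hx (h ▸ hu))
  have hwb : w = b := (hbw.resolve_right fun h => hB hb hw (H.ne_of_adj h) h).symm
  rw [hua, hwb]

lemma eq_of_strongProd_adj_of_mem_prod_right (hA : G.IsIndepSet A) {y b : W} {a : V}
    (hy : y ∉ B) (hyB : ∀ w ∈ B, H.Adj y w → w = b) (ha : a ∈ A) {p : V × W}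
    (hp : p ∈ A ×ˢ B) (hadj : (strongProd G H).Adj (a, y) p) : p = (a, b) :=
  congrArg Prod.swap (eq_of_strongProd_adj_of_mem_prod_left hA hy hyB ha (p := p.swap)
    ⟨hp.2, hp.1⟩ (strongProd_adj_swap.mpr hadj))

lemma isIndepSet_insert_strongProd (hA : G.IsIndepSet A) (hB : H.IsIndepSet B) {x a : V}
    {b : W} (hx : x ∉ A) (hxA : ∀ u ∈ A, G.Adj x u → u = a) (hb : b ∈ B) :
    (strongProd G H).IsIndepSet (insert (x, b) (A ×ˢ B \ {(a, b)})) := by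
  have hq : ∀ q ∈ A ×ˢ B \ {(a, b)}, ¬ (strongProd G H).Adj (x, b) q := fun _ hq hadj =>
    hq.2 (eq_of_strongProd_adj_of_mem_prod_left hB hx hxA hb hq.1 hadj)
  exact Set.pairwise_insert.mpr ⟨(isIndepSet_prod_strongProd hA hB).mono Set.sdiff_subset,
    fun q hqs _ => ⟨hq q hqs, fun h => hq q hqs h.symm⟩⟩

lemma isIndepSet_insert_insert_strongProd (hA : G.IsIndepSet A) (hB : H.IsIndepSet B)
    {x a : V} {y b : W} (hx : x ∉ A) (hxA : ∀ u ∈ A, G.Adj x u → u = a) (hy : y ∉ B)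
    (hyB : ∀ w ∈ B, H.Adj y w → w = b) (ha : a ∈ A) (hb : b ∈ B)
    (hxy : ¬ (strongProd G H).Adj (a, y) (x, b)) :
    (strongProd G H).IsIndepSet (insert (a, y) (insert (x, b) (A ×ˢ B \ {(a, b)}))) := by
  have hq : ∀ q ∈ insert (x, b) (A ×ˢ B \ {(a, b)}), ¬ (strongProd G H).Adj (a, y) q := by
    rintro q (rfl | hq)
    exacts [hxy, fun hadj => hq.2 (eq_of_strongProd_adj_of_mem_prod_right hA hy hyB ha hq.1 hadj)]
  exact Set.pairwise_insert.mpr ⟨isIndepSet_insert_strongProd hA hB hx hxA hb,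
    fun q hqs _ => ⟨hq q hqs, fun h => hq q hqs h.symm⟩⟩

def prodMatching (M : Set (Sym2 V)) (N : Set (Sym2 W)) : Set (Sym2 (V × W)) :=
  {e | ∃ f ∈ M, ∃ w, e = f.map (·, w)} ∪ {e | ∃ u ∉ mVerts M, ∃ f ∈ N, e = f.map (u, ·)}

variable {M : Set (Sym2 V)} {N : Set (Sym2 W)}

lemma mk_mem_prodMatching_left {x y : V} (h : s(x, y) ∈ M) (w : W) :
    s((x, w), (y, w)) ∈ prodMatching M N :=
  .inl ⟨_, h, w, rfl⟩

lemma mk_mem_prodMatching_right {u : V} {y z : W} (hu : u ∉ mVerts M) (h : s(y, z) ∈ N) :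
    s((u, y), (u, z)) ∈ prodMatching M N :=
  .inr ⟨u, hu, _, h, rfl⟩

lemma mem_map_prodMk_left {f : Sym2 V} {w : W} {p : V × W} :
    p ∈ f.map (·, w) ↔ p.1 ∈ f ∧ p.2 = w := by
  obtain ⟨x, y⟩ := p
  simp [Sym2.mem_map, and_comm, eq_comm]

lemma mem_map_prodMk_right {f : Sym2 W} {u : V} {p : V × W} :
    p ∈ f.map (u, ·) ↔ p.1 = u ∧ p.2 ∈ f := by
  obtain ⟨x, y⟩ := p
  simp [Sym2.mem_map, eq_comm, and_comm]

lemma mem_mVerts_prodMatching {p : V × W} :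
    p ∈ mVerts (prodMatching M N) ↔ p.1 ∈ mVerts M ∨ p.2 ∈ mVerts N := by
  constructor
  · rintro ⟨e, ⟨f, hf, w, rfl⟩ | ⟨u, -, f, hf, rfl⟩, hp⟩
    · exact .inl ⟨f, hf, (mem_map_prodMk_left.mp hp).1⟩
    · exact .inr ⟨f, hf, (mem_map_prodMk_right.mp hp).2⟩
  · by_cases hp₁ : p.1 ∈ mVerts M
    · obtain ⟨f, hf, hpf⟩ := hp₁
      exact fun _ => ⟨_, .inl ⟨f, hf, p.2, rfl⟩, mem_map_prodMk_left.mpr ⟨hpf, rfl⟩⟩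
    · rintro (hp₁' | ⟨f, hf, hpf⟩)
      · exact absurd hp₁' hp₁
      · exact ⟨_, .inr ⟨p.1, hp₁, f, hf, rfl⟩, mem_map_prodMk_right.mpr ⟨rfl, hpf⟩⟩

lemma isMatchingSet_prodMatching (hM : IsMatchingSet G M) (hN : IsMatchingSet H N) :
    IsMatchingSet (strongProd G H) (prodMatching M N) := by
  refine ⟨?_, fun e he f hf hne p ⟨hpe, hpf⟩ => hne ?_⟩
  · rintro e (⟨f, hf, w, rfl⟩ | ⟨u, -, f, hf, rfl⟩) <;> induction f using Sym2.ind
    · have hxy := hM.1 hf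
      simp_all [hxy.ne]
    · have hyz := hN.1 hf
      simp_all [hyz.ne]
  · rcases he with ⟨e', he', w, rfl⟩ | ⟨u, hu, e', he', rfl⟩ <;>
      rcases hf with ⟨f', hf', w', rfl⟩ | ⟨u', hu', f', hf', rfl⟩
    · rw [mem_map_prodMk_left] at hpe hpf
      rw [hM.eq_of_mem he' hf' hpe.1 hpf.1, ← hpe.2, hpf.2]
    · rw [mem_map_prodMk_left] at hpe
      rw [mem_map_prodMk_right] at hpf
      exact absurd ⟨e', he', hpe.1⟩ (hpf.1 ▸ hu')
    · rw [mem_map_prodMk_right] at hpe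
      rw [mem_map_prodMk_left] at hpf
      exact absurd ⟨f', hf', hpf.1⟩ (hpe.1 ▸ hu)
    · rw [mem_map_prodMk_right] at hpe hpf
      rw [hN.eq_of_mem he' hf' hpe.2 hpf.2, ← hpe.1, hpf.1]

lemma isEDS_prodMatching (hM : IsMatchingSet G M) (hN : IsMatchingSet H N)
    (hA : G.IsIndepSet (mVerts M)ᶜ) (hB : H.IsIndepSet (mVerts N)ᶜ) :
    IsEDS (strongProd G H) (prodMatching M N) := by
  refine (isMatchingSet_prodMatching hM hN).isEDS ?_
  convert isIndepSet_prod_strongProd hA hB using 1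
  ext p
  simp [mem_mVerts_prodMatching]

lemma compl_mVerts_prodMatching_sdiff (hM : IsMatchingSet G M) (hN : IsMatchingSet H N)
    {S : Set (Sym2 (V × W))} (hS : S ⊆ prodMatching M N) :
    (mVerts (prodMatching M N \ S))ᶜ = (mVerts M)ᶜ ×ˢ (mVerts N)ᶜ ∪ mVerts S := by
  ext p
  simp only [Set.mem_compl_iff, (isMatchingSet_prodMatching hM hN).mem_mVerts_sdiff hS,
    mem_mVerts_prodMatching, Set.mem_union, Set.mem_prod]
  tauto

end StrongProduct

structure IsExposedAlternatingPath (G : SimpleGraph V) (M : Set (Sym2 V)) (a a' a'' : V) :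
    Prop where
  isMatchingSet : IsMatchingSet G M
  isIndepSet_compl : G.IsIndepSet (mVerts M)ᶜ
  exposed : a ∉ mVerts M
  adj : G.Adj a a'
  mem : s(a', a'') ∈ M
  eq_of_adj : ∀ u ∉ mVerts M, G.Adj a'' u → u = a

lemma exists_isExposedAlternatingPath [Finite V] [Nontrivial V] {G : SimpleGraph V}
    (hG : G.Preconnected) (hpm : ¬ ∃ M, IsPerfectMatchingSet G M) :
    ∃ M a a' a'', IsExposedAlternatingPath G M a a' a'' := by
  obtain ⟨M, hM⟩ := exists_isMaxMatching G
  obtain ⟨a, ha⟩ : ∃ a, a ∉ mVerts M := by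
    by_contra! h
    exact hpm ⟨M, hM.1, h⟩
  obtain ⟨a', haa'⟩ := hG.exists_adj_of_nontrivial a
  obtain ⟨f, hf, ha'f⟩ : a' ∈ mVerts M := by
    by_contra ha'
    exact hM.isIndepSet_compl ha ha' haa'.ne haa'
  obtain ⟨a'', rfl⟩ := Sym2.mem_iff_exists.mp ha'f
  exact ⟨M, a, a', a'', hM.1, hM.isIndepSet_compl, ha, haa', hf,
    fun u hu hu'' => hM.eq_of_adj_exposed ha haa' hf hu hu''⟩

namespace IsExposedAlternatingPath

variable {G : SimpleGraph V} {M : Set (Sym2 V)} {a a' a'' : V}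

lemma matched_adj (hP : IsExposedAlternatingPath G M a a' a'') : G.Adj a' a'' :=
  hP.isMatchingSet.1 hP.mem

lemma mem_mVerts_left (hP : IsExposedAlternatingPath G M a a' a'') : a' ∈ mVerts M :=
  ⟨_, hP.mem, Sym2.mem_mk_left _ _⟩

lemma mem_mVerts_right (hP : IsExposedAlternatingPath G M a a' a'') : a'' ∈ mVerts M :=
  ⟨_, hP.mem, Sym2.mem_mk_right _ _⟩

lemma ne_left (hP : IsExposedAlternatingPath G M a a' a'') : a ≠ a' :=
  fun h => hP.exposed (h ▸ hP.mem_mVerts_left)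

lemma ne_right (hP : IsExposedAlternatingPath G M a a' a'') : a ≠ a'' :=
  fun h => hP.exposed (h ▸ hP.mem_mVerts_right)

end IsExposedAlternatingPath

section Exchanges

variable [Finite V] [Finite W] {G : SimpleGraph V} {H : SimpleGraph W} {M : Set (Sym2 V)}
  {N : Set (Sym2 W)} {a a' a'' : V} {b b' b'' : W}

theorem not_wellEdgeDominated_of_triangles (hP : IsExposedAlternatingPath G M a a' a'')
    (hQ : IsExposedAlternatingPath H N b b' b'') (hGa : G.Adj a a'') (hHb : H.Adj b b'') :
    ¬ WellEdgeDominated (strongProd G H) := by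
  have hSM : {s((a', b), (a'', b)), s((a, b'), (a, b''))} ⊆ prodMatching M N :=
    Set.insert_subset (mk_mem_prodMatching_left hP.mem b)
      (Set.singleton_subset_iff.mpr (mk_mem_prodMatching_right hP.exposed hQ.mem))
  have hR := compl_mVerts_prodMatching_sdiff hP.isMatchingSet hQ.isMatchingSet hSM
  refine not_wellEdgeDominated_of_exchange
    (isMatchingSet_prodMatching hP.isMatchingSet hQ.isMatchingSet)
    (isEDS_prodMatching hP.isMatchingSet hQ.isMatchingSet hP.isIndepSet_compl hQ.isIndepSet_compl)
    hSM (T := {s((a, b), (a', b)), s((a, b), (a, b')), s((a, b), (a, b''))}) ?_ ?_ ?_ ?_ ?_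
  · simp [Set.insert_subset_iff, hP.adj, hQ.adj, hHb, hP.ne_left, hQ.ne_left, hQ.ne_right]
  · simp [hP.ne_left.symm, hP.ne_right.symm, hQ.ne_left, hQ.ne_left.symm, hQ.ne_right,
      hQ.matched_adj.ne]
  · rw [hR]
    intro p hp
    simp only [mem_mVerts_insert, mem_mVerts_singleton, Sym2.mem_iff] at hp
    rcases hp with (rfl | rfl) | (rfl | rfl) | (rfl | rfl) <;> simp [hP.exposed, hQ.exposed]
  · rw [hR]
    refine (isIndepSet_insert_strongProd hP.isIndepSet_compl hQ.isIndepSet_compl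
      (Set.notMem_compl_iff.mpr hP.mem_mVerts_right) hP.eq_of_adj hQ.exposed).mono ?_
    intro p
    simp only [Set.mem_insert_iff, Set.mem_sdiff, Set.mem_union, Set.mem_prod, Set.mem_compl_iff,
      Set.mem_singleton_iff, mem_mVerts_insert, mem_mVerts_singleton, Sym2.mem_iff]
    tauto
  · simp only [hR, Set.mem_insert_iff, Set.mem_singleton_iff, forall_eq_or_imp, forall_eq]
    refine ⟨⟨(a', b), (a'', b), ?_⟩, ⟨(a, b'), (a'', b), ?_⟩, ⟨(a, b''), (a'', b), ?_⟩⟩ <;>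
      simp [hP.ne_left, hP.ne_left.symm, hP.ne_right, hP.ne_right.symm, hP.matched_adj.ne,
        hP.matched_adj.ne.symm, hQ.ne_left, hQ.ne_left.symm, hQ.ne_right, hQ.ne_right.symm,
        hQ.matched_adj.ne, hQ.matched_adj.ne.symm, hP.matched_adj, hQ.adj.symm, hGa, hHb.symm]

/-- The edge `s((a', b''), (a'', b''))` shares `(a'', b'')` with the new edge
`s((a'', b'), (a'', b''))`, so it cannot be its own private edge; it is removed and put back so
that `(a', b'')` is freed and `s((a', b''), (a, b''))` serves instead. -/
theorem not_wellEdgeDominated_of_not_triangles (hP : IsExposedAlternatingPath G M a a' a'')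
    (hQ : IsExposedAlternatingPath H N b b' b'') (htri : ¬ (G.Adj a a'' ∧ H.Adj b b'')) :
    ¬ WellEdgeDominated (strongProd G H) := by
  have hSM : {s((a', b), (a'', b)), s((a, b'), (a, b'')), s((a', b'), (a'', b')),
      s((a', b''), (a'', b''))} ⊆ prodMatching M N := by
    simp only [Set.insert_subset_iff, Set.singleton_subset_iff]
    exact ⟨mk_mem_prodMatching_left hP.mem b, mk_mem_prodMatching_right hP.exposed hQ.mem,
      mk_mem_prodMatching_left hP.mem b', mk_mem_prodMatching_left hP.mem b''⟩
  have hR := compl_mVerts_prodMatching_sdiff hP.isMatchingSet hQ.isMatchingSet hSM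
  refine not_wellEdgeDominated_of_exchange
    (isMatchingSet_prodMatching hP.isMatchingSet hQ.isMatchingSet)
    (isEDS_prodMatching hP.isMatchingSet hQ.isMatchingSet hP.isIndepSet_compl hQ.isIndepSet_compl)
    hSM (T := {s((a, b), (a', b)), s((a, b), (a, b')), s((a, b), (a', b')),
      s((a'', b'), (a'', b'')), s((a', b''), (a'', b''))}) ?_ ?_ ?_ ?_ ?_
  · simp [Set.insert_subset_iff, hP.adj, hQ.adj, hP.matched_adj, hQ.matched_adj, hP.ne_left,
      hQ.ne_left, hP.matched_adj.ne, hQ.matched_adj.ne]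
  · simp [hP.ne_left, hP.ne_left.symm, hP.ne_right, hP.ne_right.symm, hP.matched_adj.ne,
      hP.matched_adj.ne.symm, hQ.ne_left, hQ.ne_left.symm, hQ.ne_right, hQ.matched_adj.ne,
      hQ.matched_adj.ne.symm]
  · rw [hR]
    intro p hp
    simp only [mem_mVerts_insert, mem_mVerts_singleton, Sym2.mem_iff] at hp
    rcases hp with (rfl | rfl) | (rfl | rfl) | (rfl | rfl) | (rfl | rfl) | (rfl | rfl) <;>
      simp [hP.exposed, hQ.exposed]
  · rw [hR]
    refine (isIndepSet_insert_insert_strongProd hP.isIndepSet_compl hQ.isIndepSet_compl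
      (Set.notMem_compl_iff.mpr hP.mem_mVerts_right) hP.eq_of_adj
      (Set.notMem_compl_iff.mpr hQ.mem_mVerts_right) hQ.eq_of_adj hP.exposed hQ.exposed
      ?_).mono ?_
    · simpa [hP.ne_right, hQ.ne_right.symm, and_comm, adj_comm] using htri
    intro p
    simp only [Set.mem_insert_iff, Set.mem_sdiff, Set.mem_union, Set.mem_prod, Set.mem_compl_iff,
      Set.mem_singleton_iff, mem_mVerts_insert, mem_mVerts_singleton, Sym2.mem_iff]
    tauto
  · simp only [hR, Set.mem_insert_iff, Set.mem_singleton_iff, forall_eq_or_imp, forall_eq]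
    refine ⟨⟨(a', b), (a'', b), ?_⟩, ⟨(a, b'), (a, b''), ?_⟩, ⟨(a', b'), (a'', b), ?_⟩,
      ⟨(a'', b'), (a'', b), ?_⟩, ⟨(a', b''), (a, b''), ?_⟩⟩ <;>
      simp [hP.ne_left, hP.ne_left.symm, hP.ne_right, hP.ne_right.symm, hP.matched_adj.ne,
        hP.matched_adj.ne.symm, hQ.ne_left, hQ.ne_left.symm, hQ.ne_right, hQ.ne_right.symm,
        hQ.matched_adj.ne, hQ.matched_adj.ne.symm, hP.matched_adj, hQ.matched_adj, hP.adj.symm,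
        hQ.adj.symm]

end Exchanges

theorem stmt4 [Fintype V] [Fintype W] (G : SimpleGraph V) (H : SimpleGraph W)
    (hGn : 2 ≤ Fintype.card V) (hHn : 2 ≤ Fintype.card W)
    (hGc : G.Connected) (hHc : H.Connected)
    (hwed : WellEdgeDominated (strongProd G H)) :
    (∃ M, IsPerfectMatchingSet G M) ∨ (∃ M, IsPerfectMatchingSet H M) := by
  by_contra h
  obtain ⟨hG, hH⟩ := not_or.mp h
  have : Nontrivial V := Fintype.one_lt_card_iff_nontrivial.mp hGn
  have : Nontrivial W := Fintype.one_lt_card_iff_nontrivial.mp hHn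
  obtain ⟨M, a, a', a'', hP⟩ := exists_isExposedAlternatingPath hGc.preconnected hG
  obtain ⟨N, b, b', b'', hQ⟩ := exists_isExposedAlternatingPath hHc.preconnected hH
  by_cases htri : G.Adj a a'' ∧ H.Adj b b''
  · exact not_wellEdgeDominated_of_triangles hP hQ htri.1 htri.2 hwed
  · exact not_wellEdgeDominated_of_not_triangles hP hQ htri hwed
end
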